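/- arXiv:2012.03765 — 6 statements merged into one kernel-verified Lean document; each statement's English description precedes it below -/
import Mathlib

section
/- Let X be a metric space, c ≥ 2, r : ℝ, and let D and D' be multisets over X × Fin c. For every test input x : X, the poisoning size between the rNN neighbor multisets satisfies S(N_r(D,x), N_r(D',x)) ≤ S(D, D'). -/
/-! The poisoning size of `A` and `B` is the larger of the two one-sided differences `A - B`
and `B - A`. Filtering commutes with multiset difference and can only shrink a multiset, so it
cannot increase the poisoning size. -/

noncomputable def pSize {α : Type*} (A B : Multiset α) : ℕ :=
  haveI := Classical.decEq α
  max A.card B.card - (A ∩ B).card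

noncomputable def Nr {X : Type*} [MetricSpace X] {c : ℕ} (r : ℝ)
    (D : Multiset (X × Fin c)) (x : X) : Multiset (X × Fin c) :=
  haveI : DecidablePred (fun p : X × Fin c => dist p.1 x ≤ r) := Classical.decPred _
  D.filter (fun p => dist p.1 x ≤ r)

namespace Multiset

variable {α : Type*} [DecidableEq α]

theorem card_sub_eq_card_sub_card_inter (A B : Multiset α) :
    (A - B).card = A.card - (A ∩ B).card := by
  rw [← sub_inter, card_sub inter_le_left]

theorem pSize_eq_max_card_sub (A B : Multiset α) :
    pSize A B = max (A - B).card (B - A).card := by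
  rw [card_sub_eq_card_sub_card_inter, card_sub_eq_card_sub_card_inter, inter_comm B A]
  unfold pSize
  -- `convert` reconciles the classical `DecidableEq` instance inside `pSize` with the ambient one.
  convert (Nat.sub_max_sub_right A.card B.card (A ∩ B).card).symm

theorem pSize_filter_le (p : α → Prop) [DecidablePred p] (A B : Multiset α) :
    pSize (A.filter p) (B.filter p) ≤ pSize A B := by
  rw [pSize_eq_max_card_sub, pSize_eq_max_card_sub, ← filter_sub, ← filter_sub]
  exact max_le_max (card_le_card (filter_le _ _)) (card_le_card (filter_le _ _))

end Multiset

theorem rnn_neighbors_pSize_le_general {X : Type*} [MetricSpace X] {c : ℕ} (r : ℝ)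
    (D D' : Multiset (X × Fin c)) (x : X) :
    pSize (Nr r D x) (Nr r D' x) ≤ pSize D D' := by
  classical
  exact Multiset.pSize_filter_le _ D D'

/-- For every test input `x`, the poisoning size between the rNN neighbor
multisets is at most the poisoning size between the training datasets. -/
theorem rnn_neighbors_pSize_le {X : Type*} [MetricSpace X] {c : ℕ} (hc : 2 ≤ c) (r : ℝ)
    (D D' : Multiset (X × Fin c)) (x : X) :
    pSize (Nr r D x) (Nr r D' x) ≤ pSize D D' :=
  rnn_neighbors_pSize_le_general r D D' x
end

section
/- Let c ≥ 2 and let T and T' be multisets over Fin c. Let a be the tie-broken majority label of T, let s_l := count_l(T), and let b be the largest label among those l ≠ a attaining the maximum of s_l over l ≠ a. If S(T,T') ≤ ⌈(s_a − s_b + 𝟙(b < a))/2⌉ − 1 (an inequality of integers), then the tie-broken majority label of T' equals a. -/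
/-- Number of votes for label `l` in a multiset of labeled examples (counted with
multiplicity). -/
def votes {X : Type*} {c : ℕ} (T : Multiset (X × Fin c)) (l : Fin c) : ℕ :=
  T.countP (fun p => p.2 = l)

/-- Tie-broken majority label: the largest label (in the order of `Fin c`) among the
labels attaining the maximum vote count. -/
noncomputable def majLabel {X : Type*} {c : ℕ} (hc : 0 < c) (T : Multiset (X × Fin c)) :
    Fin c :=
  (Finset.univ.filter (fun l : Fin c => ∀ l', votes T l' ≤ votes T l)).max'
    (by
      haveI : NeZero c := ⟨hc.ne'⟩
      obtain ⟨b, -, hb⟩ := Finset.exists_max_image (Finset.univ : Finset (Fin c)) (votes T)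
        Finset.univ_nonempty
      exact ⟨b, Finset.mem_filter.mpr ⟨Finset.mem_univ b, fun l' => hb l' (Finset.mem_univ l')⟩⟩)

/-- The largest label, among those `l ≠ a`, attaining the maximum of `s l` over `l ≠ a`. -/
noncomputable def secondLabel {c : ℕ} (hc : 2 ≤ c) (s : Fin c → ℕ) (a : Fin c) : Fin c :=
  (Finset.univ.filter (fun l : Fin c => l ≠ a ∧ ∀ l', l' ≠ a → s l' ≤ s l)).max'
    (by
      have h1 : 1 < Fintype.card (Fin c) := by rw [Fintype.card_fin]; omega
      obtain ⟨l0, hl0⟩ := Fintype.exists_ne_of_one_lt_card h1 a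
      have hne : (Finset.univ.filter (fun l : Fin c => l ≠ a)).Nonempty :=
        ⟨l0, Finset.mem_filter.mpr ⟨Finset.mem_univ _, hl0⟩⟩
      obtain ⟨b, hb, hbmax⟩ := Finset.exists_max_image _ s hne
      refine ⟨b, Finset.mem_filter.mpr ⟨Finset.mem_univ _, (Finset.mem_filter.mp hb).2, ?_⟩⟩
      intro l' hl'
      exact hbmax l' (Finset.mem_filter.mpr ⟨Finset.mem_univ _, hl'⟩))

/-- Tie-broken majority label of a multiset of labels: the largest label (in the order
of `Fin c`) among the labels attaining the maximum multiplicity. -/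
noncomputable def majP {c : ℕ} (hc : 0 < c) (T : Multiset (Fin c)) : Fin c :=
  (Finset.univ.filter (fun l : Fin c => ∀ l', T.count l' ≤ T.count l)).max'
    (by
      haveI : NeZero c := ⟨hc.ne'⟩
      obtain ⟨b, -, hb⟩ := Finset.exists_max_image (Finset.univ : Finset (Fin c))
        (fun l => T.count l) Finset.univ_nonempty
      exact ⟨b, Finset.mem_filter.mpr ⟨Finset.mem_univ b, fun l' => hb l' (Finset.mem_univ l')⟩⟩)

/-!
Moving from `T` to `T'` changes every label count by at most `k := pSize T T'`, so the margin by
which `a` beats a label `l` in the tie-broken order shrinks by at most `2 k`. Among the labels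
`l ≠ a`, the runner-up `b` is the hardest to beat in that order, and the hypothesis says exactly
that `a` beats `b` by more than `2 k`.
-/

section PoisoningSize

variable {α : Type*}

theorem pSize_eq [DecidableEq α] (A B : Multiset α) :
    pSize A B = max A.card B.card - (A ∩ B).card := by
  unfold pSize
  congr
  exact Subsingleton.elim _ _

theorem pSize_comm (A B : Multiset α) : pSize A B = pSize B A := by
  classical
  rw [pSize_eq, pSize_eq, max_comm, Multiset.inter_comm]

theorem count_le_count_add_pSize [DecidableEq α] (A B : Multiset α) (x : α) :
    A.count x ≤ B.count x + pSize A B := by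
  have hsplit := Multiset.sub_add_inter A B
  have hcount := congrArg (Multiset.count x) hsplit
  have hcard := congrArg Multiset.card hsplit
  rw [Multiset.count_add] at hcount
  rw [Multiset.card_add] at hcard
  have := Multiset.count_le_card x (A - B)
  have := Multiset.count_le_of_le x (Multiset.inter_le_right (s := A) (t := B))
  have := le_max_left A.card B.card
  rw [pSize_eq]
  omega

end PoisoningSize

section Majority

variable {c : ℕ}

/-- `a` wins the tie-broken comparison against `l` iff `T.count l + 𝟙(a < l) ≤ T.count a`. -/
theorem majP_eq_of_forall_count_add_ite_le (hc : 0 < c) {T : Multiset (Fin c)} {a : Fin c}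
    (h : ∀ l, l ≠ a → T.count l + (if a < l then 1 else 0) ≤ T.count a) : majP hc T = a := by
  have hmem : a ∈ Finset.univ.filter (fun l : Fin c => ∀ l', T.count l' ≤ T.count l) := by
    refine Finset.mem_filter.mpr ⟨Finset.mem_univ _, fun l => ?_⟩
    rcases eq_or_ne l a with rfl | hl
    · rfl
    · exact (Nat.le_add_right _ _).trans (h l hl)
  refine le_antisymm (Finset.max'_le _ _ _ fun m hm => ?_) (Finset.le_max' _ a hmem)
  by_contra! ham
  have hbeat := h m ham.ne'
  have := (Finset.mem_filter.mp hm).2 a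
  rw [if_pos ham] at hbeat
  omega

theorem secondLabel_mem (hc : 2 ≤ c) (s : Fin c → ℕ) (a : Fin c) :
    secondLabel hc s a ≠ a ∧ ∀ l, l ≠ a → s l ≤ s (secondLabel hc s a) := by
  have hmem : secondLabel hc s a ∈
      Finset.univ.filter (fun l : Fin c => l ≠ a ∧ ∀ l', l' ≠ a → s l' ≤ s l) :=
    Finset.max'_mem _ _
  exact (Finset.mem_filter.mp hmem).2

theorem le_secondLabel (hc : 2 ≤ c) (s : Fin c → ℕ) {a l : Fin c} (hl : l ≠ a)
    (hmax : ∀ l', l' ≠ a → s l' ≤ s l) : l ≤ secondLabel hc s a :=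
  Finset.le_max' _ l (Finset.mem_filter.mpr ⟨Finset.mem_univ _, hl, hmax⟩)

theorem add_ite_le_secondLabel (hc : 2 ≤ c) (s : Fin c → ℕ) {a l : Fin c} (hl : l ≠ a) :
    s l + (if a < l then 1 else 0) ≤
      s (secondLabel hc s a) + (if a < secondLabel hc s a then 1 else 0) := by
  obtain ⟨hba, hbmax⟩ := secondLabel_mem hc s a
  have hlb := hbmax l hl
  rcases le_or_gt l (secondLabel hc s a) with hle | hgt
  · split_ifs <;> omega
  · have hstrict : s l < s (secondLabel hc s a) := by
      by_contra! hsl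
      exact hgt.not_ge (le_secondLabel hc s hl fun l' hl' => (hbmax l' hl').trans hsl)
    split_ifs <;> omega

end Majority

theorem Int.two_mul_lt_of_le_ceil_half_sub_one {k n : ℤ} (h : k ≤ ⌈(n : ℚ) / 2⌉ - 1) :
    2 * k < n := by
  have : (k : ℚ) < n / 2 := Int.lt_ceil.mp (by omega)
  exact_mod_cast (by linarith : (2 * k : ℚ) < n)

/-- if the poisoning size between the label multisets `T` and `T'` is at most
`⌈(s_a − s_b + 𝟙(b < a))/2⌉ − 1`, the tie-broken majority label of `T'` equals that of `T`. -/
theorem majority_label_stable {c : ℕ} (hc : 2 ≤ c) (T T' : Multiset (Fin c)) (a b : Fin c)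
    (hb : b = secondLabel hc (fun l => T.count l) a)
    (h : (pSize T T' : ℤ) ≤
      ⌈(((T.count a : ℤ) - (T.count b : ℤ) + if b < a then 1 else 0 : ℤ) : ℚ) / 2⌉ - 1) :
    majP (by omega : 0 < c) T' = a := by
  have hmargin := Int.two_mul_lt_of_le_ceil_half_sub_one h
  have hba : b ≠ a := hb ▸ (secondLabel_mem hc _ a).1
  refine majP_eq_of_forall_count_add_ite_le _ fun l hl => ?_
  have hrunnerUp := hb ▸ add_ite_le_secondLabel hc (fun l => T.count l) hl
  have hl_up := count_le_count_add_pSize T' T l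
  have ha_down := count_le_count_add_pSize T T' a
  rw [pSize_comm] at hl_up
  split_ifs at hmargin hrunnerUp ⊢ <;> omega
end

section
/- Let X be a metric space, c ≥ 2, k a natural number, ρ : X × Fin c → ℕ injective, and x : X. If D and D' are multisets over X × Fin c with S(D,D') ≤ 1 (i.e., D' is obtained from D by modifying, adding, or removing at most one example), then the kNN neighbor multisets satisfy S(N_k(D,x), N_k(D',x)) ≤ 1. -/
/-- The kNN ordering w.r.t. a test input `x`, with ties broken by the ranking `ρ`
(larger ranks first): `p` precedes `q` iff `dist p.1 x < dist q.1 x`, or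
`dist p.1 x = dist q.1 x` and `ρ p ≥ ρ q`. -/
def knnLE {X : Type*} [MetricSpace X] {c : ℕ} (ρ : X × Fin c → ℕ) (x : X)
    (p q : X × Fin c) : Prop :=
  dist p.1 x < dist q.1 x ∨ (dist p.1 x = dist q.1 x ∧ ρ q ≤ ρ p)

/-- kNN neighbor multiset: the first `min k (card D)` elements of `D` in the order
`knnLE ρ x` (sort `D` by this order and take the first `k`). -/
noncomputable def Nk {X : Type*} [MetricSpace X] {c : ℕ} {ρ : X × Fin c → ℕ}
    (hρ : Function.Injective ρ) (k : ℕ) (D : Multiset (X × Fin c)) (x : X) :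
    Multiset (X × Fin c) :=
  haveI : DecidableRel (knnLE ρ x) := Classical.decRel _
  haveI : IsTrans _ (knnLE ρ x) := ⟨by
    rintro p q s (h1 | ⟨h1, h1'⟩) (h2 | ⟨h2, h2'⟩)
    · exact Or.inl (h1.trans h2)
    · exact Or.inl (h1.trans_eq h2)
    · exact Or.inl (h1.trans_lt h2)
    · exact Or.inr ⟨h1.trans h2, h2'.trans h1'⟩⟩
  haveI : IsAntisymm _ (knnLE ρ x) := ⟨by
    rintro p q (h1 | ⟨h1, h1'⟩) (h2 | ⟨h2, h2'⟩)
    · exact absurd h2 (lt_asymm h1)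
    · exact absurd h2.symm h1.ne
    · exact absurd h1.symm h2.ne
    · exact hρ (le_antisymm h2' h1')⟩
  haveI : IsTotal _ (knnLE ρ x) := ⟨by
    intro p q
    rcases lt_trichotomy (dist p.1 x) (dist q.1 x) with h | h | h
    · exact Or.inl (Or.inl h)
    · rcases le_total (ρ q) (ρ p) with h' | h'
      · exact Or.inl (Or.inr ⟨h, h'⟩)
      · exact Or.inr (Or.inr ⟨h.symm, h'⟩)
    · exact Or.inr (Or.inl h)⟩
  (↑((D.sort (knnLE ρ x)).take k) : Multiset (X × Fin c))

namespace List

theorem Sublist.take_sub_sublist_take {α : Type*} {l₁ l₂ : List α} (h : l₁ <+ l₂) {m : ℕ}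
    (hm : l₂.length ≤ l₁.length + m) (k : ℕ) : l₁.take (k - m) <+ l₂.take k := by
  induction h generalizing k m with
  | slnil => simp
  | cons a h ih =>
    cases k with
    | zero => simp
    | succ j =>
      have hlen := h.length_le
      simp only [length_cons] at hm
      rw [take_succ_cons, show j + 1 - m = j - (m - 1) by omega]
      exact (ih (by omega) j).cons a
  | cons_cons a h ih =>
    cases k with
    | zero => simp
    | succ j =>
      simp only [length_cons] at hm
      rcases Nat.lt_or_ge j m with hj | hj
      · simp [show j + 1 - m = 0 by omega]
      · rw [take_succ_cons, show j + 1 - m = j - m + 1 by omega, take_succ_cons]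
        exact (ih (by omega) j).cons_cons a

end List

namespace Multiset

theorem sort_sublist_sort_of_le {α : Type*} (r : α → α → Prop) [DecidableRel r] [IsTrans α r]
    [Std.Antisymm r] [Std.Total r] {s t : Multiset α} (h : s ≤ t) :
    (s.sort r).Sublist (t.sort r) := by
  refine List.sublist_of_subperm_of_pairwise ?_ (pairwise_sort s r) (pairwise_sort t r)
  rwa [← coe_le, sort_eq, sort_eq]

end Multiset

theorem pSize_le_iff {α : Type*} {A B : Multiset α} {n : ℕ} :
    pSize A B ≤ n ↔ ∃ W, W ≤ A ∧ W ≤ B ∧ A.card ≤ W.card + n ∧ B.card ≤ W.card + n := by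
  classical
  have hpSize : pSize A B = max A.card B.card - (A ∩ B).card := by
    unfold pSize
    congr
  rw [hpSize]
  constructor
  · intro h
    exact ⟨A ∩ B, Multiset.inter_le_left, Multiset.inter_le_right, by omega, by omega⟩
  · rintro ⟨W, hWA, hWB, hA, hB⟩
    have := Multiset.card_le_card (Multiset.le_inter hWA hWB)
    omega

section Nk

open OrderDual

variable {X : Type*} [MetricSpace X] {c : ℕ} {ρ : X × Fin c → ℕ} (hρ : Function.Injective ρ)
  (x : X)

theorem knnLE_iff_toLex_le {p q : X × Fin c} :
    knnLE ρ x p q ↔ toLex (dist p.1 x, toDual (ρ p)) ≤ toLex (dist q.1 x, toDual (ρ q)) := by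
  simp [knnLE, Prod.Lex.le_iff]

instance : IsTrans (X × Fin c) (knnLE ρ x) :=
  ⟨fun _ _ _ => by simpa only [knnLE_iff_toLex_le] using le_trans⟩

instance : Std.Total (knnLE ρ x) :=
  ⟨fun _ _ => by simpa only [knnLE_iff_toLex_le] using le_total _ _⟩

include hρ in
theorem knnLE_antisymm : Std.Antisymm (knnLE ρ x) :=
  ⟨fun _ _ hpq hqp => hρ <| by
    simpa using congrArg (fun z => ofDual (ofLex z).2)
      (le_antisymm ((knnLE_iff_toLex_le x).1 hpq) ((knnLE_iff_toLex_le x).1 hqp))⟩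

theorem card_Nk (k : ℕ) (D : Multiset (X × Fin c)) : (Nk hρ k D x).card = min k D.card := by
  simp [Nk]

theorem Nk_sub_le_Nk_of_le {W D : Multiset (X × Fin c)} (hle : W ≤ D) {m : ℕ}
    (hm : D.card ≤ W.card + m) (k : ℕ) : Nk hρ (k - m) W x ≤ Nk hρ k D x := by
  classical
  have := knnLE_antisymm hρ x
  unfold Nk
  rw [Multiset.coe_le]
  have hsort := Multiset.sort_sublist_sort_of_le (knnLE ρ x) hle
  exact (hsort.take_sub_sublist_take (by simpa using hm) k).subperm

end Nk

theorem knn_neighbors_pSize_le_one_general {X : Type*} [MetricSpace X] {c : ℕ}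
    (k : ℕ) {ρ : X × Fin c → ℕ} (hρ : Function.Injective ρ) (x : X)
    (D D' : Multiset (X × Fin c)) (h : pSize D D' ≤ 1) :
    pSize (Nk hρ k D x) (Nk hρ k D' x) ≤ 1 := by
  obtain ⟨W, hWD, hWD', hD, hD'⟩ := pSize_le_iff.1 h
  refine pSize_le_iff.2 ⟨Nk hρ (k - 1) W x, Nk_sub_le_Nk_of_le hρ x hWD hD k,
    Nk_sub_le_Nk_of_le hρ x hWD' hD' k, ?_, ?_⟩ <;>
  · rw [card_Nk, card_Nk]
    omega

/-- modifying, adding, or removing at most one training example changes the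
kNN neighbor multiset by a poisoning size of at most one. -/
theorem knn_neighbors_pSize_le_one {X : Type*} [MetricSpace X] {c : ℕ} (hc : 2 ≤ c)
    (k : ℕ) {ρ : X × Fin c → ℕ} (hρ : Function.Injective ρ) (x : X)
    (D D' : Multiset (X × Fin c)) (h : pSize D D' ≤ 1) :
    pSize (Nk hρ k D x) (Nk hρ k D' x) ≤ 1 :=
  knn_neighbors_pSize_le_one_general k hρ x D D' h
end

section
/- Let X be a metric space, c ≥ 2, r : ℝ, D a multiset over X × Fin c, x : X, and y ∈ Fin c. Let a := rNN_r(D,x), s_l := s_l(N_r(D,x)), and let b be the largest label among those l ≠ a attaining the maximum of s_l over l ≠ a. Suppose a = y. Then for every natural number e and every multiset D* over X × Fin c with S(D,D*) ≤ e, if rNN_r(D*,x) ≠ y, then the number of elements with label a in the multiset difference N_r(D,x) − N_r(D*,x) is at least s_a − s_b − e + 𝟙(b < a) (an inequality of integers). -/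
/-- Multiset difference (with classical decidable equality). -/
noncomputable def mdiff {α : Type*} (A B : Multiset α) : Multiset α :=
  haveI := Classical.decEq α
  A - B

/-- rNN prediction: tie-broken majority label among the rNN neighbors. -/
noncomputable def rNNpred {X : Type*} [MetricSpace X] {c : ℕ} (hc : 0 < c) (r : ℝ)
    (D : Multiset (X × Fin c)) (x : X) : Fin c :=
  majLabel hc (Nr r D x)

/-!
Write `N = N_r(D,x)`, `N* = N_r(D*,x)` and `a'` for the label predicted from `D*`. Votes for a
label can only grow by the examples that were added, of which there are at most `e`, so
`s_a(N) - s_a(N - N*) ≤ s_a(N*) ≤ s_{a'}(N*) ≤ s_{a'}(N) + e ≤ s_b(N) + e`,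
the last step because `a' ≠ a` and `b` maximises the votes among labels other than `a`.
The tie-break gains one vote: the second inequality is strict when `a' < a`, the last one
when `b < a'`, and since `a' ≠ a`, at least one of these holds whenever `b < a`.
-/

section Votes

variable {X : Type*} {c : ℕ}

theorem votes_le_votes_mdiff_add (A B : Multiset (X × Fin c)) (l : Fin c) :
    votes A l ≤ votes (mdiff A B) l + votes B l := by
  let _ := Classical.decEq (X × Fin c)
  unfold mdiff votes
  rw [← Multiset.countP_add]
  exact Multiset.countP_le_of_le _ le_tsub_add

theorem majLabel_mem_filter (hc : 0 < c) (T : Multiset (X × Fin c)) :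
    majLabel hc T ∈ Finset.univ.filter (fun l : Fin c => ∀ l', votes T l' ≤ votes T l) :=
  Finset.max'_mem _ _

theorem votes_add_ite_le_votes_majLabel (hc : 0 < c) (T : Multiset (X × Fin c)) (l : Fin c) :
    votes T l + (if majLabel hc T < l then 1 else 0) ≤ votes T (majLabel hc T) := by
  have hmax := (Finset.mem_filter.mp (majLabel_mem_filter hc T)).2
  split_ifs with hlt
  · refine lt_of_le_of_ne (hmax l) fun heq => hlt.not_ge ?_
    exact Finset.le_max' _ _ (Finset.mem_filter.mpr ⟨Finset.mem_univ _, heq ▸ hmax⟩)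
  · exact hmax l

end Votes

section SecondLabel

variable {c : ℕ} (hc : 2 ≤ c) (s : Fin c → ℕ) (a : Fin c)

theorem secondLabel_mem_filter :
    secondLabel hc s a ∈
      Finset.univ.filter (fun l : Fin c => l ≠ a ∧ ∀ l', l' ≠ a → s l' ≤ s l) :=
  Finset.max'_mem _ _

theorem apply_add_ite_le_apply_secondLabel {l : Fin c} (hl : l ≠ a) :
    s l + (if secondLabel hc s a < l then 1 else 0) ≤ s (secondLabel hc s a) := by
  have hmax := (Finset.mem_filter.mp (secondLabel_mem_filter hc s a)).2.2
  split_ifs with hlt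
  · refine lt_of_le_of_ne (hmax l hl) fun heq => hlt.not_ge ?_
    exact Finset.le_max' _ _ (Finset.mem_filter.mpr ⟨Finset.mem_univ _, hl, heq ▸ hmax⟩)
  · exact hmax l hl

end SecondLabel

theorem card_mdiff_le_pSize {α : Type*} (A B : Multiset α) : (mdiff B A).card ≤ pSize A B := by
  classical
  unfold mdiff pSize
  convert Nat.sub_le_sub_right (le_max_right A.card B.card) (A ∩ B).card using 1
  rw [← Multiset.sub_inter, Multiset.card_sub Multiset.inter_le_left, Multiset.inter_comm]

theorem mdiff_Nr_le {X : Type*} [MetricSpace X] {c : ℕ} (r : ℝ) (A B : Multiset (X × Fin c))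
    (x : X) : mdiff (Nr r A x) (Nr r B x) ≤ mdiff A B := by
  let _ := Classical.decEq (X × Fin c)
  unfold mdiff Nr
  rw [← Multiset.filter_sub]
  exact Multiset.filter_le _ _

theorem votes_mdiff_Nr_le_pSize {X : Type*} [MetricSpace X] {c : ℕ} (r : ℝ)
    (A B : Multiset (X × Fin c)) (x : X) (l : Fin c) :
    votes (mdiff (Nr r B x) (Nr r A x)) l ≤ pSize A B :=
  calc votes (mdiff (Nr r B x) (Nr r A x)) l
      ≤ (mdiff (Nr r B x) (Nr r A x)).card := Multiset.countP_le_card _ _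
    _ ≤ (mdiff B A).card := Multiset.card_le_card (mdiff_Nr_le r B A x)
    _ ≤ pSize A B := card_mdiff_le_pSize A B

/-- if rNN correctly classifies `x` before the attack but misclassifies it
after poisoning at most `e` examples, then at least `s_a − s_b − e + 𝟙(b < a)` neighbors
with label `a` were removed. -/
theorem rnn_removed_votes_lower_bound {X : Type*} [MetricSpace X] {c : ℕ} (hc : 2 ≤ c)
    (r : ℝ) (D : Multiset (X × Fin c)) (x : X) (y : Fin c) (a b : Fin c)
    (hb : b = secondLabel hc (fun l => votes (Nr r D x) l) a)
    (hay : a = y) (e : ℕ) (Dstar : Multiset (X × Fin c)) (hD : pSize D Dstar ≤ e)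
    (hmis : rNNpred (by omega : 0 < c) r Dstar x ≠ y) :
    (votes (Nr r D x) a : ℤ) - (votes (Nr r D x) b : ℤ) - (e : ℤ) +
        (if b < a then 1 else 0) ≤
      (votes (mdiff (Nr r D x) (Nr r Dstar x)) a : ℤ) := by
  subst hay hb
  set a' := rNNpred (by omega : 0 < c) r Dstar x
  set N := Nr r D x
  set N' := Nr r Dstar x
  have removed := votes_le_votes_mdiff_add N N' a
  have tie_after : votes N' a + (if a' < a then 1 else 0) ≤ votes N' a' :=
    votes_add_ite_le_votes_majLabel _ N' a
  have added := votes_le_votes_mdiff_add N' N a'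
  have added_le : votes (mdiff N' N) a' ≤ e := (votes_mdiff_Nr_le_pSize r D Dstar x a').trans hD
  have tie_before := apply_add_ite_le_apply_secondLabel hc (fun l => votes N l) a hmis
  split_ifs at * <;> omega
end

section
/- Let m and e be natural numbers and c : Fin m → ℕ a nonincreasing sequence (i ≤ j implies c j ≤ c i). Let w be the least natural number w' ≤ m such that Σ_{i : w' ≤ i < m} c i ≤ e (such w' exists since the empty tail sum at w' = m is ≤ e). Then every finite set M of indices in Fin m with Σ_{i∈M} c i ≤ e satisfies m − |M| ≥ w; equivalently, at least w indices lie outside M. -/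
/-!
If `|M| = k`, exchanging the indices of `M` below `m - k` for the missing indices of the tail
`{m - k, …, m - 1}` replaces each weight by one that is no larger, since `c` is antitone. So the
tail of length `|M|` has weight at most `∑_{i ∈ M} c i ≤ e`, i.e. `m - |M|` is one of the
candidates `w'`, and the least one is at most it.
-/

open Finset

lemma Fin.card_filter_sub_le_val {m k : ℕ} (hk : k ≤ m) :
    #(univ.filter fun i : Fin m => m - k ≤ (i : ℕ)) = k := by
  have := card_filter_add_card_filter_not (s := univ) fun i : Fin m => (i : ℕ) < m - k
  simp only [not_lt, Fin.card_filter_val_lt, card_univ, Fintype.card_fin] at this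
  omega

section

variable {ι β : Type*} [AddCommMonoid β] [LinearOrder β] [IsOrderedCancelAddMonoid β]

lemma Finset.sum_le_sum_of_card_eq_of_forall_le {s t : Finset ι} (f : ι → β) (hst : #s = #t)
    (h : ∀ i ∈ s, ∀ j ∈ t, f i ≤ f j) : ∑ i ∈ s, f i ≤ ∑ j ∈ t, f j := by
  rcases s.eq_empty_or_nonempty with rfl | hs
  · rw [card_empty, eq_comm, card_eq_zero] at hst
    simp [hst]
  obtain ⟨i₀, hi₀, hmax⟩ := s.exists_max_image f hs
  calc ∑ i ∈ s, f i ≤ #s • f i₀ := sum_le_card_nsmul s f _ hmax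
    _ = #t • f i₀ := by rw [hst]
    _ ≤ ∑ j ∈ t, f j := card_nsmul_le_sum t f _ (h i₀ hi₀)

lemma Antitone.sum_filter_sub_card_le_val_le_sum {m : ℕ} {c : Fin m → β} (hc : Antitone c)
    (M : Finset (Fin m)) :
    ∑ i ∈ univ.filter (fun i : Fin m => m - #M ≤ (i : ℕ)), c i ≤ ∑ i ∈ M, c i := by
  set T := univ.filter fun i : Fin m => m - #M ≤ (i : ℕ)
  have hT : #T = #M :=
    Fin.card_filter_sub_le_val ((card_le_univ M).trans_eq (Fintype.card_fin m))
  rw [← sum_sdiff_le_sum_sdiff]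
  refine sum_le_sum_of_card_eq_of_forall_le c (card_sdiff_comm hT) fun i hi j hj => hc ?_
  simp only [T, mem_sdiff, mem_filter, mem_univ, true_and] at hi hj
  rw [Fin.le_def]
  omega

end

/-- let `w` be the least `w' ≤ m` whose tail sum `∑_{w' ≤ i < m} c i` is at
most `e`. Then every index set `M` with `∑_{i ∈ M} c i ≤ e` satisfies `m - |M| ≥ w`. -/
theorem least_tail_le_of_sum_le {m e : ℕ} (c : Fin m → ℕ) (hc : Antitone c) (w : ℕ)
    (hw : IsLeast {w' : ℕ | w' ≤ m ∧
      ∑ i ∈ Finset.univ.filter (fun i : Fin m => w' ≤ (i : ℕ)), c i ≤ e} w)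
    (M : Finset (Fin m)) (hM : ∑ i ∈ M, c i ≤ e) :
    w ≤ m - M.card :=
  hw.2 ⟨Nat.sub_le _ _, (hc.sum_filter_sub_card_le_val_le_sum M).trans hM⟩
end

section
/- (Attack construction / tightness of individual certification for rNN) Let X be a metric space, c ≥ 2, r ≥ 0, D a multiset over X × Fin c, and x : X. Let a := rNN_r(D,x), s_l := s_l(N_r(D,x)), and let b be the largest label among those l ≠ a attaining the maximum of s_l over l ≠ a. Then for every natural number e with e ≥ s_a − s_b + 𝟙(b < a), the poisoned dataset D* obtained from D by adding e copies of the example (x, b) satisfies S(D,D*) = e and rNN_r(D*,x) ≠ a. -/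
theorem pSize_add_right {α : Type*} (A B : Multiset α) : pSize A (A + B) = B.card := by
  classical
  have hinter : A ∩ (A + B) = A := inf_of_le_left (Multiset.le_add_right A B)
  simp only [pSize, hinter, Multiset.card_add]
  omega

section Votes

variable {X : Type*} {c : ℕ}

theorem votes_add (S T : Multiset (X × Fin c)) (l : Fin c) :
    votes (S + T) l = votes S l + votes T l :=
  Multiset.countP_add _ _ _

theorem votes_replicate (e : ℕ) (y : X) (b l : Fin c) :
    votes (Multiset.replicate e (y, b)) l = if l = b then e else 0 := by
  rw [votes, ← Multiset.coe_replicate, Multiset.coe_countP, List.countP_replicate]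
  simp [eq_comm]

theorem votes_le_votes_majLabel (hc : 0 < c) (T : Multiset (X × Fin c)) (l : Fin c) :
    votes T l ≤ votes T (majLabel hc T) :=
  (Finset.mem_filter.mp (Finset.max'_mem _ _ : majLabel hc T ∈ _)).2 l

theorem le_majLabel_of_forall_votes_le (hc : 0 < c) {T : Multiset (X × Fin c)} {b : Fin c}
    (hb : ∀ l, votes T l ≤ votes T b) : b ≤ majLabel hc T :=
  Finset.le_max' _ b (Finset.mem_filter.mpr ⟨Finset.mem_univ b, hb⟩)

theorem majLabel_add_replicate_ne (hc : 0 < c) (T : Multiset (X × Fin c)) (y : X)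
    {a b : Fin c} (hba : b ≠ a) (ha : ∀ l, votes T l ≤ votes T a) {e : ℕ}
    (he : votes T a + (if b < a then 1 else 0) ≤ votes T b + e) :
    majLabel hc (T + Multiset.replicate e (y, b)) ≠ a := by
  set T' := T + Multiset.replicate e (y, b)
  have hvotes : ∀ l, votes T' l = votes T l + if l = b then e else 0 := fun l => by
    rw [votes_add, votes_replicate]
  have hvotes_a : votes T' a = votes T a := by simp [hvotes, hba.symm]
  have hvotes_b : votes T' b = votes T b + e := by simp [hvotes]
  intro hmaj
  rcases hba.lt_or_gt with hlt | hgt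
  · rw [if_pos hlt] at he
    have := votes_le_votes_majLabel hc T' b
    rw [hmaj, hvotes_a, hvotes_b] at this
    omega
  · rw [if_neg (lt_asymm hgt)] at he
    have hb_max : ∀ l, votes T' l ≤ votes T' b := fun l => by
      rw [hvotes, hvotes_b]
      split_ifs with hl
      · rw [hl]
      · exact (ha l).trans (by omega)
    exact (hmaj ▸ le_majLabel_of_forall_votes_le hc hb_max).not_gt hgt

end Votes

theorem secondLabel_ne {c : ℕ} (hc : 2 ≤ c) (s : Fin c → ℕ) (a : Fin c) :
    secondLabel hc s a ≠ a :=
  (Finset.mem_filter.mp (Finset.max'_mem _ _ : secondLabel hc s a ∈ _)).2.1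

theorem Nr_add_replicate_self {X : Type*} [MetricSpace X] {c : ℕ} {r : ℝ} (hr : 0 ≤ r)
    (D : Multiset (X × Fin c)) (x : X) (e : ℕ) (b : Fin c) :
    Nr r (D + Multiset.replicate e (x, b)) x = Nr r D x + Multiset.replicate e (x, b) := by
  rw [Nr, Multiset.filter_add]
  congr 1
  refine Multiset.filter_eq_self.mpr fun p hp => ?_
  rw [Multiset.eq_of_mem_replicate hp, dist_self]
  exact hr

/-- attack construction / tightness of individual certification for rNN:
if `e ≥ s_a − s_b + 𝟙(b < a)`, then adding `e` copies of the example `(x, b)` to `D`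
yields a poisoned dataset of poisoning size exactly `e` on which rNN no longer predicts
`a` for `x`. -/
theorem rnn_attack_construction {X : Type*} [MetricSpace X] {c : ℕ} (hc : 2 ≤ c)
    {r : ℝ} (hr : 0 ≤ r) (D : Multiset (X × Fin c)) (x : X) (a b : Fin c)
    (ha : a = rNNpred (by omega) r D x)
    (hb : b = secondLabel hc (fun l => votes (Nr r D x) l) a)
    (e : ℕ)
    (he : (votes (Nr r D x) a : ℤ) - (votes (Nr r D x) b : ℤ) +
      (if b < a then 1 else 0) ≤ (e : ℤ))
    (Dstar : Multiset (X × Fin c)) (hDstar : Dstar = D + Multiset.replicate e (x, b)) :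
    pSize D Dstar = e ∧ rNNpred (by omega : 0 < c) r Dstar x ≠ a := by
  subst hDstar
  refine ⟨by rw [pSize_add_right, Multiset.card_replicate], ?_⟩
  have ha_max : ∀ l, votes (Nr r D x) l ≤ votes (Nr r D x) a :=
    ha ▸ votes_le_votes_majLabel _ _
  have hba : b ≠ a := hb ▸ secondLabel_ne hc _ a
  have he' : votes (Nr r D x) a + (if b < a then 1 else 0) ≤ votes (Nr r D x) b + e := by
    split_ifs at he ⊢ <;> omega
  rw [rNNpred, Nr_add_replicate_self hr]
  exact majLabel_add_replicate_ne _ _ x hba ha_max he'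
end
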